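/- arXiv:2603.04067 — 5 statements merged into one kernel-verified Lean document; each statement's English description precedes it below -/
import Mathlib

section
/- Let R be a ring, (r_n)_{n<ω} a sequence in R such that the principal right ideals r_0···r_m R are strictly decreasing. Let B be the free R-module with basis {b_i : i < ω} and set a_i = b_i − r_i · b_{i+1}. Then the elements {a_i : i < ω} are linearly independent over R. -/
/-- The ordered product `r 0 * r 1 * ⋯ * r m`. -/
def partialProd {R : Type*} [Ring R] (r : ℕ → R) (m : ℕ) : R :=
  (List.ofFn fun i : Fin (m + 1) => r i).prod

/-- The principal right ideal generated by `p`, as a set. -/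
def principalRight {R : Type*} [Ring R] (p : R) : Set R := {x | ∃ t, p * t = x}

/-- If the principal right ideals `r 0 ⋯ r m R` are strictly decreasing, then the
elements `a i = b i - r i • b (i+1)` of the free module on `{b i : i < ω}` are
linearly independent over `R`. -/
theorem a_linearIndependent {R : Type*} [Ring R] (r : ℕ → R)
    (hstrict : ∀ m, principalRight (partialProd r (m + 1)) ⊂
      principalRight (partialProd r m)) :
    LinearIndependent R (fun i : ℕ =>
      (Finsupp.single i (1 : R) : ℕ →₀ R) - r i • Finsupp.single (i + 1) 1) := by
  rw [linearIndependent_iff]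
  intro l hl
  have key : ∀ k, l k - (match k with | 0 => 0 | Nat.succ j => l j * r j) = 0 := by
    intro k
    have h := DFunLike.congr_fun hl k
    rw [Finsupp.linearCombination_apply, Finsupp.sum_apply] at h
    simp only [Finsupp.smul_apply, Finsupp.sub_apply, Finsupp.single_apply,
      smul_eq_mul, mul_sub] at h
    rw [Finsupp.sum_sub, Finsupp.zero_apply] at h
    convert h using 2
    · rw [Finsupp.sum]
      rw [Finset.sum_eq_single k]
      · simp
      · intro b _ hb; simp [hb]
      · intro hk; simp [Finsupp.notMem_support_iff.mp hk]
    · match k with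
      | 0 =>
        rw [Finsupp.sum]
        symm
        apply Finset.sum_eq_zero
        intro b _; simp
      | Nat.succ j =>
        rw [Finsupp.sum]
        rw [Finset.sum_eq_single j]
        · simp
        · intro b _ hb; simp [Nat.succ_injective.ne hb, hb]
        · intro hk; simp [Finsupp.notMem_support_iff.mp hk]
  ext k
  induction k with
  | zero => simpa using key 0
  | succ j ih =>
      have := key (j + 1)
      simp only [ih, zero_mul, sub_zero] at this ⊢
      simpa using this
end

section
/- Let R be a domain and let B be the free R-module on basis {b_i : i<ω}, with a_i = b_i − r_i b_{i+1} where each r_i is nonzero and the chain of ideals r_0···r_m R is strictly decreasing. Then the submodule A = ⟨a_i : i < ω⟩ is not a direct summand of B. (Indeed b_0 ≡ (r_0 ··· r_{m}) b_{m+1} modulo A for every m, so the image of b_0 in B/A is divisible by all products r_0···r_m, which is impossible for an element of a projection complement.) -/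
/-- Over a domain `R`, if the ideals `r 0 ⋯ r m R` strictly decrease, then the
submodule `A = ⟨a i : i < ω⟩` (with `a i = b i - r i • b (i+1)`) of the free
module on `{b i : i < ω}` is not a direct summand. -/
theorem A_not_direct_summand {R : Type*} [CommRing R] [IsDomain R] (r : ℕ → R)
    (h0 : ∀ i, r i ≠ 0)
    (hstrict : ∀ m : ℕ, Ideal.span {∏ i ∈ Finset.range (m + 2), r i} <
      Ideal.span {∏ i ∈ Finset.range (m + 1), r i}) :
    ¬ ∃ C : Submodule R (ℕ →₀ R),
      IsCompl
        (Submodule.span R (Set.range fun i : ℕ =>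
          (Finsupp.single i (1 : R) : ℕ →₀ R) - r i • Finsupp.single (i + 1) 1))
        C := by
  rintro ⟨C, hC⟩
  set a : ℕ → (ℕ →₀ R) := fun i =>
    (Finsupp.single i (1 : R) : ℕ →₀ R) - r i • Finsupp.single (i + 1) 1 with ha
  set A : Submodule R (ℕ →₀ R) := Submodule.span R (Set.range a) with hA
  set P : ℕ → R := fun m => ∏ i ∈ Finset.range m, r i with hP
  have hPne : ∀ m, P m ≠ 0 := fun m =>
    Finset.prod_ne_zero_iff.mpr fun i _ => h0 i
  have haMem : ∀ i, a i ∈ A := fun i => Submodule.subset_span ⟨i, rfl⟩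
  -- b 0 - P (m+1) • b (m+1) ∈ A
  have key : ∀ m : ℕ,
      (Finsupp.single 0 (1 : R) : ℕ →₀ R) - P (m + 1) • Finsupp.single (m + 1) 1 ∈ A := by
    intro m
    induction m with
    | zero =>
      have : (Finsupp.single 0 (1 : R) : ℕ →₀ R) - P 1 • Finsupp.single 1 1 = a 0 := by
        simp [ha, hP]
      rw [this]; exact haMem 0
    | succ n ih =>
      have heq : (Finsupp.single 0 (1 : R) : ℕ →₀ R) - P (n + 2) • Finsupp.single (n + 2) 1
          = ((Finsupp.single 0 (1 : R) : ℕ →₀ R) - P (n + 1) • Finsupp.single (n + 1) 1)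
            + P (n + 1) • a (n + 1) := by
        simp only [ha, hP, smul_sub, smul_smul, Finset.prod_range_succ]
        abel
      rw [heq]
      exact Submodule.add_mem _ ih (Submodule.smul_mem _ _ (haMem (n + 1)))
  -- the projection onto C along A
  let π : (ℕ →₀ R) →ₗ[R] C := Submodule.linearProjOfIsCompl C A hC.symm
  have hπA : ∀ x ∈ A, π x = 0 := fun x hx =>
    Submodule.linearProjOfIsCompl_apply_right' hC.symm hx
  set c : ℕ →₀ R := (π (Finsupp.single 0 1) : ℕ →₀ R) with hc
  -- c is divisible coordinatewise by every P (m+1)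
  have hdiv : ∀ m j : ℕ, ∃ d : R, c j = P (m + 1) * d := by
    intro m j
    have h1 : π ((Finsupp.single 0 (1 : R) : ℕ →₀ R)
        - P (m + 1) • Finsupp.single (m + 1) 1) = 0 := hπA _ (key m)
    rw [map_sub, map_smul, sub_eq_zero] at h1
    refine ⟨(π (Finsupp.single (m + 1) 1) : ℕ →₀ R) j, ?_⟩
    rw [hc, h1]
    simp
  -- b 0 - c ∈ A
  have hbc : (Finsupp.single 0 (1 : R) : ℕ →₀ R) - c ∈ A := by
    rw [← Submodule.linearProjOfIsCompl_apply_eq_zero_iff (q := A) hC.symm]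
    rw [map_sub, sub_eq_zero, hc]
    exact (Submodule.linearProjOfIsCompl_apply_left hC.symm _).symm
  -- write b 0 - c as a finite combination of the a i
  obtain ⟨s, hs⟩ := Finsupp.mem_span_range_iff_exists_finsupp.mp hbc
  -- coordinate equations
  have eval : ∀ j : ℕ,
      ((s.sum fun i t => t • a i : ℕ →₀ R)) j
        = s j - (if h : 1 ≤ j then s (j - 1) * r (j - 1) else 0) := by
    intro j
    rw [Finsupp.sum_apply, Finsupp.sum]
    simp only [ha, Finsupp.smul_apply, Finsupp.sub_apply, Finsupp.single_apply, smul_eq_mul,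
      mul_sub, mul_ite, mul_one, mul_zero]
    rw [Finset.sum_sub_distrib]
    congr 1
    · rw [Finset.sum_ite_eq' s.support j (fun i => s i)]
      split
      · rfl
      · rw [Finsupp.notMem_support_iff.mp ‹_›]
    · rcases j with _ | j'
      · simp
      · simp only [Nat.add_sub_cancel, dif_pos (Nat.le_add_left 1 j')]
        simp only [add_left_inj]
        rw [Finset.sum_ite_eq' s.support j' (fun i => s i * r i)]
        split
        · rfl
        · rw [Finsupp.notMem_support_iff.mp ‹_›, zero_mul]
  have e0 : s 0 = 1 - c 0 := by
    have := eval 0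
    rw [hs] at this
    simpa using this.symm
  have estep : ∀ j : ℕ, s (j + 1) = s j * r j - c (j + 1) := by
    intro j
    have := eval (j + 1)
    rw [hs] at this
    simp only [Finsupp.sub_apply, Finsupp.single_apply, Nat.add_sub_cancel,
      dif_pos (Nat.le_add_left 1 j)] at this
    have h01 : (0 : ℕ) ≠ j + 1 := (Nat.succ_ne_zero j).symm
    rw [if_neg h01] at this
    linear_combination -this
  -- choose N beyond the support of s
  set N : ℕ := s.support.sup id + 1 with hN
  have hsN : s N = 0 := by
    by_contra h
    have hmem : N ∈ s.support := Finsupp.mem_support_iff.mpr h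
    have := Finset.le_sup (f := id) hmem
    simp only [id] at this
    omega
  have hN1 : 1 ≤ N := Nat.le_add_left 1 _
  -- main induction
  have main : ∀ j, j ≤ N → ∃ u : R, s j = P j * (1 - c 0 + r N * u) := by
    intro j
    induction j with
    | zero =>
      intro _
      exact ⟨0, by simp [hP, e0]⟩
    | succ n ih =>
      intro hn1
      obtain ⟨u, hu⟩ := ih (Nat.le_of_succ_le hn1)
      obtain ⟨d, hd⟩ := hdiv N (n + 1)
      -- P (n+1) * r N divides P (N+1)
      have hsub : P (n + 1) * (∏ i ∈ Finset.Ico (n + 1) (N + 1), r i) = P (N + 1) :=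
        Finset.prod_range_mul_prod_Ico r (by omega)
      have hNmem : N ∈ Finset.Ico (n + 1) (N + 1) := Finset.mem_Ico.mpr ⟨hn1, Nat.lt_succ_self N⟩
      obtain ⟨e, he⟩ := Finset.dvd_prod_of_mem r hNmem
      refine ⟨u - d * e, ?_⟩
      rw [estep n, hu, hd, ← hsub, he]
      have : P (n + 1) = P n * r n := Finset.prod_range_succ r n
      rw [this]
      ring
  obtain ⟨u, hu⟩ := main N le_rfl
  rw [hsN] at hu
  have hzero : 1 - c 0 + r N * u = 0 := by
    rcases mul_eq_zero.mp hu.symm with h | h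
    · exact absurd h (hPne N)
    · exact h
  -- r N divides c 0
  obtain ⟨d0, hd0⟩ := hdiv N 0
  have hrNd : r N ∣ P (N + 1) := Finset.dvd_prod_of_mem r (Finset.self_mem_range_succ N)
  obtain ⟨w, hw⟩ := hrNd
  have hunit : IsUnit (r N) := by
    refine IsUnit.of_mul_eq_one (a := r N) (w * d0 - u) ?_
    have : c 0 = r N * (w * d0) := by rw [hd0, hw]; ring
    have h1 : r N * (w * d0) - r N * u = 1 := by
      linear_combination -hzero - this
    rw [mul_sub]; exact h1
  -- contradiction with strictness
  have hNeq : N - 1 + 1 = N := Nat.succ_pred_eq_of_pos hN1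
  have hlt := hstrict (N - 1)
  rw [show N - 1 + 2 = N + 1 by omega, hNeq] at hlt
  have heq : Ideal.span {P (N + 1)} = Ideal.span {P N} := by
    apply Ideal.span_singleton_eq_span_singleton.mpr
    rw [show P (N + 1) = P N * r N from Finset.prod_range_succ r N]
    exact (associated_mul_unit_left (P N) (r N) hunit)
  rw [hP] at heq
  exact absurd heq (ne_of_lt hlt)
end

section
/- In a free group F, if x and y are elements with x^n = y^n for some n > 0, then x = y. -/
-- helper: conjugation commutes with powers
theorem mul_pow_eq_conj_pow {G : Type*} [Group G] (u c : G) (n : ℕ) :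
    (u * c * u⁻¹) ^ n = u * c ^ n * u⁻¹ := by
  rw [conj_pow]

namespace FreeGroupPowAux

open List FreeGroup

variable {α : Type*} [DecidableEq α]

/-- Two letters do not cancel. -/
def NC (a b : α × Bool) : Prop := ¬(a.1 = b.1 ∧ a.2 = !b.2)

/-- A word is reduced: no adjacent cancelling pair. -/
def Reduced (L : List (α × Bool)) : Prop := List.Chain' NC L

/-- Cyclically reduced: reduced, and the last letter does not cancel with the first. -/
def CycRed (L : List (α × Bool)) : Prop :=
  Reduced L ∧ ∀ a ∈ L.getLast?, ∀ b ∈ L.head?, NC a b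

lemma Reduced.reduce_eq {L : List (α × Bool)} (h : Reduced L) : reduce L = L := by
  induction L with
  | nil => rfl
  | cons x L ih =>
    have htl : Reduced L := h.tail
    rw [reduce.cons, ih htl]
    cases L with
    | nil => rfl
    | cons hd tl =>
      have hx : NC x hd := (List.isChain_cons_cons.1 h).1
      simp only [NC] at hx
      simp [if_neg hx]

lemma reduced_reduce (L : List (α × Bool)) : Reduced (reduce L) := by
  induction L with
  | nil => exact List.isChain_nil
  | cons x L ih =>
    rw [reduce.cons]
    cases hL : reduce L with
    | nil => exact List.isChain_singleton x
    | cons hd tl =>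
      rw [hL] at ih
      by_cases hc : x.1 = hd.1 ∧ x.2 = !hd.2
      · simp only [if_pos hc]
        exact ih.tail
      · simp only [if_neg hc]
        exact List.isChain_cons_cons.2 ⟨hc, ih⟩

lemma reduced_toWord (x : FreeGroup α) : Reduced x.toWord := by
  have := reduced_reduce x.toWord
  rwa [reduce_toWord] at this

lemma invRev_cons (x : α × Bool) (L : List (α × Bool)) :
    invRev (x :: L) = invRev L ++ [(x.1, !x.2)] := by simp [invRev]

lemma invRev_append (L₁ L₂ : List (α × Bool)) :
    invRev (L₁ ++ L₂) = invRev L₂ ++ invRev L₁ := by simp [invRev]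

lemma getLast?_invRev (L : List (α × Bool)) :
    (invRev L).getLast? = L.head?.map (fun a => (a.1, !a.2)) := by
  rw [invRev, getLast?_reverse, head?_map]

/-- Every reduced word decomposes as `U ++ C ++ invRev U` with `C` cyclically reduced. -/
lemma exists_decomp : ∀ (k : ℕ) (L : List (α × Bool)), L.length ≤ k → Reduced L →
    ∃ U C, L = U ++ C ++ invRev U ∧ CycRed C := by
  intro k
  induction k with
  | zero =>
    intro L hL _
    have : L = [] := List.eq_nil_of_length_eq_zero (Nat.le_zero.1 hL)
    exact ⟨[], [], by simp [this, invRev], List.isChain_nil, by simp⟩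
  | succ k ih =>
    intro L hL hred
    by_cases hcyc : ∀ a ∈ L.getLast?, ∀ b ∈ L.head?, NC a b
    · exact ⟨[], L, by simp [invRev], hred, hcyc⟩
    · push_neg at hcyc
      obtain ⟨a, ha, b, hb, hab⟩ := hcyc
      simp only [NC, not_not] at hab
      -- L is nonempty with head b
      cases L with
      | nil => simp at hb
      | cons b0 T =>
        have hb0 : b0 = b := by simpa using hb
        rw [← hb0] at hab
        cases T with
        | nil =>
          -- singleton: a = b0 and a cancels b0, impossible
          have hba : b0 = a := by simpa using ha
          rw [hba] at hab
          exact absurd hab.2 (by simp)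
        | cons c T' =>
          obtain ⟨M, a', hT⟩ := (c :: T').eq_nil_or_concat.resolve_left (by simp)
          have hlast : (b0 :: c :: T').getLast? = some a' := by
            rw [hT, List.concat_eq_append, ← List.cons_append, List.getLast?_concat]
          have ha' : a' = a := by
            rw [hlast] at ha
            simp only [Option.mem_def, Option.some.injEq] at ha
            exact ha
          subst ha'
          have hLM : b0 :: c :: T' = [b0] ++ M ++ [a'] := by
            rw [hT, List.concat_eq_append]; simp
          have hMred : Reduced M := by
            refine hred.infix ?_
            exact ⟨[b0], [a'], by simpa using hLM.symm⟩
          have hMlen : M.length ≤ k := by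
            have := hL
            rw [hLM] at this
            simp only [List.length_append, List.length_cons, List.length_nil] at this
            omega
          obtain ⟨U, C, hMdec, hCcyc⟩ := ih M hMlen hMred
          refine ⟨b0 :: U, C, ?_, hCcyc⟩
          have haval : a' = (b0.1, !b0.2) := by
            obtain ⟨a1, a2⟩ := a'
            obtain ⟨b1, b2⟩ := b0
            simp only [Prod.mk.injEq]
            exact ⟨hab.1, hab.2⟩
          rw [hLM, hMdec, invRev_cons, haval]
          simp
/-- The `n`-fold concatenation of a word. -/
def wpow (n : ℕ) (C : List (α × Bool)) : List (α × Bool) := (List.replicate n C).flatten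

lemma wpow_succ (n : ℕ) (C : List (α × Bool)) : wpow (n + 1) C = C ++ wpow n C := by
  simp [wpow, List.replicate_succ]

lemma mk_wpow (n : ℕ) (C : List (α × Bool)) : mk (wpow n C) = (mk C) ^ n :=
  (pow_mk n).symm

lemma length_wpow (n : ℕ) (C : List (α × Bool)) : (wpow n C).length = n * C.length := by
  induction n with
  | zero => simp [wpow]
  | succ n ih => rw [wpow_succ, List.length_append, ih]; ring

lemma wpow_ne_nil {C : List (α × Bool)} (hC : C ≠ []) (m : ℕ) : wpow (m + 1) C ≠ [] := by
  rw [wpow_succ]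
  simp [hC]

lemma head?_wpow {C : List (α × Bool)} (hC : C ≠ []) (m : ℕ) :
    (wpow (m + 1) C).head? = C.head? := by
  rw [wpow_succ]
  cases C with
  | nil => exact absurd rfl hC
  | cons a t => rfl

lemma getLast?_wpow {C : List (α × Bool)} (hC : C ≠ []) (m : ℕ) :
    (wpow (m + 1) C).getLast? = C.getLast? := by
  induction m with
  | zero => simp [wpow_succ, wpow]
  | succ m ih =>
    rw [wpow_succ, getLast?_append_of_ne_nil _ (wpow_ne_nil hC m), ih]

lemma reduced_wpow {C : List (α × Bool)} (hC : CycRed C) (n : ℕ) : Reduced (wpow n C) := by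
  induction n with
  | zero => exact List.isChain_nil
  | succ n ih =>
    rw [wpow_succ]
    refine List.IsChain.append hC.1 ih ?_
    intro a ha b hb
    by_cases hCnil : C = []
    · subst hCnil; simp at ha
    · cases n with
      | zero => simp [wpow] at hb
      | succ m =>
        rw [head?_wpow hCnil m] at hb
        exact hC.2 a ha b hb

/-- The reduced word of a conjugate power. -/
lemma reduced_conj_wpow {U C : List (α × Bool)} (hR : Reduced (U ++ C ++ invRev U))
    (hC : CycRed C) (hCne : C ≠ []) (m : ℕ) :
    Reduced (U ++ wpow (m + 1) C ++ invRev U) := by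
  have h1 : Reduced (U ++ C) := (List.isChain_append.1 hR).1
  have hU : Reduced U := (List.isChain_append.1 h1).1
  have hJ1 : ∀ a ∈ U.getLast?, ∀ b ∈ C.head?, NC a b := (List.isChain_append.1 h1).2.2
  have hIU : Reduced (invRev U) := (List.isChain_append.1 hR).2.1
  have hJ2 : ∀ a ∈ C.getLast?, ∀ b ∈ (invRev U).head?, NC a b := by
    have := (List.isChain_append.1 hR).2.2
    rwa [getLast?_append_of_ne_nil _ hCne] at this
  refine List.IsChain.append ?_ hIU ?_
  · refine List.IsChain.append hU (reduced_wpow hC (m + 1)) ?_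
    intro a ha b hb
    rw [head?_wpow hCne m] at hb
    exact hJ1 a ha b hb
  · intro a ha b hb
    rw [getLast?_append_of_ne_nil _ (wpow_ne_nil hCne m), getLast?_wpow hCne m] at ha
    exact hJ2 a ha b hb

lemma toWord_conj_pow {x : FreeGroup α} {U C : List (α × Bool)}
    (hx : x.toWord = U ++ C ++ invRev U) (hC : CycRed C) (hCne : C ≠ []) (m : ℕ) :
    (x ^ (m + 1)).toWord = U ++ wpow (m + 1) C ++ invRev U := by
  have hR : Reduced (U ++ C ++ invRev U) := hx ▸ reduced_toWord x
  have hxeq : x = mk U * mk C * (mk U)⁻¹ := by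
    rw [inv_mk, mul_mk, mul_mk, ← hx, mk_toWord]
  have : x ^ (m + 1) = mk (U ++ wpow (m + 1) C ++ invRev U) := by
    rw [hxeq, mul_pow_eq_conj_pow, ← mk_wpow, inv_mk, mul_mk, mul_mk]
  rw [this, toWord_mk, (reduced_conj_wpow hR hC hCne m).reduce_eq]

end FreeGroupPowAux

namespace FreeGroupPowAux

open List FreeGroup

variable {α : Type*} [DecidableEq α]

lemma aux_eq {U C V D : List (α × Bool)} (m : ℕ)
    (hC : CycRed C) (hCne : C ≠ []) (hDne : D ≠ [])
    (hlen : U.length ≤ V.length)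
    (E : U ++ wpow (m + 1) C ++ invRev U = V ++ wpow (m + 1) D ++ invRev V) :
    U = V ∧ C = D := by
  -- U is a prefix of V
  have hUp : U <+: V ++ wpow (m + 1) D ++ invRev V := by
    rw [← E, List.append_assoc]; exact List.prefix_append U _
  have hVp : V <+: V ++ wpow (m + 1) D ++ invRev V := by
    rw [List.append_assoc]; exact List.prefix_append V _
  obtain ⟨V₁, hV⟩ := List.prefix_of_prefix_length_le hUp hVp hlen
  -- rewrite E, cancelling U on the left and invRev U on the right
  have E2 : wpow (m + 1) C = V₁ ++ wpow (m + 1) D ++ invRev V₁ := by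
    rw [← hV, invRev_append] at E
    have E' : U ++ (wpow (m + 1) C ++ invRev U) =
        U ++ ((V₁ ++ wpow (m + 1) D ++ invRev V₁) ++ invRev U) := by
      simpa [List.append_assoc] using E
    have E'' := List.append_cancel_left E'
    have E''' : wpow (m + 1) C ++ invRev U =
        (V₁ ++ wpow (m + 1) D ++ invRev V₁) ++ invRev U := by
      simpa [List.append_assoc] using E''
    exact List.append_cancel_right E'''
  -- show V₁ = []
  have hV₁ : V₁ = [] := by
    by_contra hne
    obtain ⟨v, V₂, rfl⟩ := List.exists_cons_of_ne_nil hne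
    have hheadC : C.head? = some v := by
      have h1 : (wpow (m + 1) C).head? = some v := by rw [E2]; rfl
      rwa [head?_wpow hCne m] at h1
    have hlastC : C.getLast? = some (v.1, !v.2) := by
      have h1 : (wpow (m + 1) C).getLast? = some (v.1, !v.2) := by
        rw [E2, getLast?_append_of_ne_nil _ (by simp [invRev]), getLast?_invRev]
        rfl
      rwa [getLast?_wpow hCne m] at h1
    exact hC.2 _ hlastC _ hheadC ⟨rfl, rfl⟩
  subst hV₁
  simp only [List.append_nil] at hV
  subst hV
  refine ⟨rfl, ?_⟩
  -- now wpow (m+1) C = wpow (m+1) D, same lengths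
  have E3 : wpow (m + 1) C = wpow (m + 1) D := by simpa [invRev] using E2
  have hlencd : C.length = D.length := by
    have := congrArg List.length E3
    rw [length_wpow, length_wpow] at this
    exact Nat.eq_of_mul_eq_mul_left (Nat.succ_pos m) this
  have E4 : C ++ wpow m C = D ++ wpow m D := by
    rw [← wpow_succ, ← wpow_succ]; exact E3
  exact (List.append_inj E4 hlencd).1

end FreeGroupPowAux

open FreeGroupPowAux FreeGroup in
/-- In a free group, `x ^ n = y ^ n` for some `n > 0` implies `x = y`. -/
theorem freeGroup_pow_injective {α : Type*} (x y : FreeGroup α) (n : ℕ)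
    (hn : 0 < n) (h : x ^ n = y ^ n) : x = y := by
  classical
  obtain ⟨m, rfl⟩ : ∃ m, n = m + 1 := ⟨n - 1, by omega⟩
  obtain ⟨U, C, hxdec, hCcyc⟩ :=
    exists_decomp x.toWord.length x.toWord le_rfl (reduced_toWord x)
  obtain ⟨V, D, hydec, hDcyc⟩ :=
    exists_decomp y.toWord.length y.toWord le_rfl (reduced_toWord y)
  have hxeq : x = FreeGroup.mk U * FreeGroup.mk C * (FreeGroup.mk U)⁻¹ := by
    rw [FreeGroup.inv_mk, FreeGroup.mul_mk, FreeGroup.mul_mk, ← hxdec, FreeGroup.mk_toWord]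
  have hyeq : y = FreeGroup.mk V * FreeGroup.mk D * (FreeGroup.mk V)⁻¹ := by
    rw [FreeGroup.inv_mk, FreeGroup.mul_mk, FreeGroup.mul_mk, ← hydec, FreeGroup.mk_toWord]
  by_cases hCne : C = []
  · -- x = 1
    have hx1 : x = 1 := by
      rw [hxeq, hCne, ← FreeGroup.one_eq_mk, mul_one, mul_inv_cancel]
    by_cases hDne : D = []
    · have hy1 : y = 1 := by
        rw [hyeq, hDne, ← FreeGroup.one_eq_mk, mul_one, mul_inv_cancel]
      rw [hx1, hy1]
    · exfalso
      have hyw := toWord_conj_pow hydec hDcyc hDne m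
      rw [← h, hx1, one_pow] at hyw
      have : ([] : List (α × Bool)) = V ++ wpow (m + 1) D ++ invRev V := by
        rw [← hyw, FreeGroup.toWord_one]
      exact wpow_ne_nil hDne m (by
        rcases List.append_eq_nil_iff.1 this.symm with ⟨h1, _⟩
        exact (List.append_eq_nil_iff.1 h1).2)
  · by_cases hDne : D = []
    · exfalso
      have hy1 : y = 1 := by
        rw [hyeq, hDne, ← FreeGroup.one_eq_mk, mul_one, mul_inv_cancel]
      have hxw := toWord_conj_pow hxdec hCcyc hCne m
      rw [h, hy1, one_pow] at hxw
      have : ([] : List (α × Bool)) = U ++ wpow (m + 1) C ++ invRev U := by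
        rw [← hxw, FreeGroup.toWord_one]
      exact wpow_ne_nil hCne m (by
        rcases List.append_eq_nil_iff.1 this.symm with ⟨h1, _⟩
        exact (List.append_eq_nil_iff.1 h1).2)
    · have hxw := toWord_conj_pow hxdec hCcyc hCne m
      have hyw := toWord_conj_pow hydec hDcyc hDne m
      have E : U ++ wpow (m + 1) C ++ invRev U = V ++ wpow (m + 1) D ++ invRev V := by
        rw [← hxw, ← hyw, h]
      rcases le_total U.length V.length with hle | hle
      · obtain ⟨hUV, hCD⟩ := aux_eq m hCcyc hCne hDne hle E
        rw [hxeq, hyeq, hUV, hCD]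
      · obtain ⟨hUV, hCD⟩ := aux_eq m hDcyc hDne hCne hle E.symm
        rw [hxeq, hyeq, hUV, hCD]
end

section
/- Let A ≤ B ≤ C be free groups such that A and B are both free factors of C. Then A is a free factor of B. -/
/-- `S` freely generates the subgroup `H`. -/
def FreelyGenerates {G : Type*} [Group G] (S : Set G) (H : Subgroup G) : Prop :=
  Subgroup.closure S = H ∧
    Function.Injective (FreeGroup.lift (fun s : S => (s : G)))

/-- `A` is a free factor of `B`: a free basis of `B` splits into a part freely
generating `A` and a complementary part. -/
def IsFreeFactorOf {G : Type*} [Group G] (A B : Subgroup G) : Prop :=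
  ∃ S T : Set G, Disjoint S T ∧ FreelyGenerates (S ∪ T) B ∧ Subgroup.closure S = A

noncomputable section
open scoped Classical
open CategoryTheory CategoryTheory.ActionCategory CategoryTheory.SingleObj Quiver FreeGroup
open IsFreeGroupoid IsFreeGroupoid.SpanningTree MulAction SemidirectProduct Function Set

universe u

theorem FreeGroupBasis.unique_lift' {ι G H : Type*} [Group G] [Group H]
    (b : FreeGroupBasis ι G) (f : ι → H) : ∃! F : G →* H, ∀ a, F (b a) = f a := by
  have key : ∀ F : G →* H, b.lift.symm F = fun i => F (b i) := fun _ => rfl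
  refine ⟨b.lift f, ?_, ?_⟩
  · intro a
    have h := congrFun (b.lift.symm_apply_apply f) a
    rw [key] at h
    exact h
  · intro F hF
    apply b.lift.symm.injective
    rw [b.lift.symm_apply_apply, key]
    exact funext hF

theorem FreeGroupBasis.ofUniqueLift_apply {G : Type u} [Group G] (X : Type u) (of : X → G)
    (h : ∀ {H : Type u} [Group H] (f : X → H), ∃! F : G →* H, ∀ a, F (of a) = f a) (x : X) :
    FreeGroupBasis.ofUniqueLift X of h x = of x := by
  show FreeGroup.lift of (FreeGroup.of x) = of x
  exact FreeGroup.lift_apply_of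

set_option linter.unusedVariables false in
/-- `actionGroupoidIsFree` with an explicitly chosen basis. -/
def actionGroupoidIsFreeOfBasis {G A : Type u} [Group G] {ι : Type u} (b : FreeGroupBasis ι G)
    [MulAction G A] : IsFreeGroupoid (ActionCategory G A) where
  quiverGenerators :=
    ⟨fun p q => { e : ι // b e • p.back = q.back }⟩
  of := fun (e : { e // _ }) => ⟨b e.1, e.2⟩
  unique_lift := by
    intro X _ f
    let f' : ι → (A → X) ⋊[mulAutArrow] G := fun e =>
      ⟨fun a => @f ⟨(), _⟩ ⟨(), a⟩ ⟨e, smul_inv_smul _ a⟩, b e⟩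
    rcases b.unique_lift' f' with ⟨F', hF', uF'⟩
    refine ⟨uncurry F' ?_, ?_, ?_⟩
    · suffices SemidirectProduct.rightHom.comp F' = MonoidHom.id _ by
        exact DFunLike.ext_iff.mp this
      apply b.ext_hom
      intro x
      rw [MonoidHom.comp_apply, hF']
      rfl
    · rintro ⟨⟨⟩, a : A⟩ ⟨⟨⟩, c⟩ ⟨e, h : b e • a = c⟩
      change (F' (b _)).left _ = _
      rw [hF']
      cases inv_smul_eq_iff.mpr h.symm
      rfl
    · intro E hE
      have : curry E = F' := by
        apply uF'
        intro e
        ext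
        · convert! hE _ _ _
          rfl
        · rfl
      apply Functor.hext
      · intro
        apply Unit.ext
      · refine ActionCategory.cases ?_
        intros
        subst this
        rfl

section Tree

variable {G : Type u} [Groupoid.{u} G] [IsFreeGroupoid G]
  (T : WideSubquiver (Symmetrify <| Generators G)) [Arborescence T]

/-- The root, retyped in `G`. -/
def rootG : G := root T

theorem treeHom_root'' : treeHom T (rootG T) = 𝟙 (rootG T) :=
  (treeHom_eq T Path.nil).trans rfl

theorem loopOfHom_root (p : End (rootG T)) : loopOfHom T p = p := by
  have key : 𝟙 (rootG T) ≫ p ≫ inv (𝟙 (rootG T)) = p := by simp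
  show treeHom T (rootG T) ≫ p ≫ inv (treeHom T (rootG T)) = p
  rw [treeHom_root'']; exact key

/-- no loop lies in the symmetrified spanning tree -/
theorem loop_not_mem_tree {a : Generators G} (e : a ⟶ a) :
    e ∉ wideSubquiverSymmetrify T a a := by
  have key : ∀ f : @Quiver.Hom (↥T) _ a a, False := by
    intro f
    letI : Unique (@Path (↥T) _ (root T) a) := Arborescence.uniquePath (V := ↥T) a
    have hu : ((default : Path (root T) a).cons f) = default := Subsingleton.elim _ _
    have h2 := congrArg Path.length hu
    erw [Path.length_cons] at h2
    omega
  rintro (h | h)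
  exacts [key ⟨Sum.inl e, h⟩, key ⟨Sum.inr e, h⟩]

/-- the universal property for the loops outside the spanning tree -/
theorem endBasis_spec :
    ∀ {X : Type u} [Group X]
      (f : ((wideSubquiverEquivSetTotal <| wideSubquiverSymmetrify T)ᶜ : Set _) → X),
      ∃! F : End (rootG T) →* X, ∀ a, F (loopOfHom T (of a.val.hom)) = f a :=
    (by
      intro X _ f
      let f' : Labelling (Generators G) X := fun a b e =>
        if h : e ∈ wideSubquiverSymmetrify T a b then 1 else f ⟨⟨a, b, e⟩, h⟩
      rcases unique_lift f' with ⟨F', hF', uF'⟩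
      refine ⟨F'.mapEnd _, ?_, ?_⟩
      · suffices ∀ {x y} (q : x ⟶ y), F'.map (loopOfHom T q) = (F'.map q : X) by
          rintro ⟨⟨a, b, e⟩, h⟩
          erw [Functor.mapEnd_apply, this, hF']
          exact dif_neg h
        intros x y q
        suffices ∀ {a} (p : Path (root T) a), F'.map (homOfPath T p) = 1 by
          simp only [this, treeHom, comp_as_mul, inv_as_inv, loopOfHom, inv_one, mul_one,
            one_mul, Functor.map_inv, Functor.map_comp]
          erw [this, this]
          simp only [inv_one, mul_one, one_mul]
        intro a p
        induction' p with b c p e ih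
        · exact F'.map_id _
        erw [homOfPath.eq_2, F'.map_comp, comp_as_mul, ih, mul_one]
        rcases e with ⟨e | e, eT⟩
        · erw [hF']
          exact dif_pos (Or.inl eT)
        · erw [F'.map_inv, inv_as_inv, inv_eq_one, hF']
          exact dif_pos (Or.inr eT)
      · intro E hE
        ext x
        show E x = F'.map x
        have h3 : (functorOfMonoidHom T E).map x = F'.map x := by
          congr
          apply uF'
          intro a b e
          change E (loopOfHom T _) = dite _ _ _
          split_ifs with h
          · rw [loopOfHom_eq_id T e h]
            exact E.map_one
          · exact hE ⟨⟨a, b, e⟩, h⟩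
        have h4 : E (loopOfHom T x) = F'.map x := h3
        rwa [loopOfHom_root] at h4)

/-- `endIsFree`, upgraded to a `FreeGroupBasis`. -/
def endBasisOfTree :
    FreeGroupBasis ((wideSubquiverEquivSetTotal <| wideSubquiverSymmetrify T)ᶜ : Set _)
      (End (rootG T)) :=
  FreeGroupBasis.ofUniqueLift ((wideSubquiverEquivSetTotal <| wideSubquiverSymmetrify T)ᶜ : Set _)
    (fun e => loopOfHom T (of e.val.hom)) (endBasis_spec T)

theorem endBasisOfTree_apply
    (j : ((wideSubquiverEquivSetTotal <| wideSubquiverSymmetrify T)ᶜ : Set _)) :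
    endBasisOfTree T j = loopOfHom T (of j.val.hom) :=
  FreeGroupBasis.ofUniqueLift_apply _ _ (endBasis_spec T) j

end Tree



theorem FreeGroupBasis.closure_range_eq_top {ι G : Type*} [Group G] (c : FreeGroupBasis ι G) :
    Subgroup.closure (Set.range ⇑c) = ⊤ := by
  have h1 : Set.range ⇑c = ⇑c.repr.symm.toMonoidHom '' Set.range FreeGroup.of := by
    rw [← Set.range_comp]; rfl
  rw [h1, ← MonoidHom.map_closure, FreeGroup.closure_range_of, ← MonoidHom.range_eq_map,
    MonoidHom.range_eq_top]
  exact c.repr.symm.surjective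

def FreelyGenerates' {G : Type*} [Group G] (S : Set G) (H : Subgroup G) : Prop :=
  Subgroup.closure S = H ∧
    Function.Injective (FreeGroup.lift (fun s : S => (s : G)))

/-- the image of a basis of a subgroup freely generates it (set version). -/
theorem freelyGenerates_of_basis {G : Type*} [Group G] {B : Subgroup G} {ι : Type*}
    (c : FreeGroupBasis ι (↥B)) :
    FreelyGenerates' (Set.range fun i => ((c i : ↥B) : G)) B := by
  set v : ι → G := fun i => ((c i : ↥B) : G) with hv
  have hvinj : Function.Injective v := B.subtype_injective.comp c.injective
  constructor
  · have h1 : Set.range v = ⇑B.subtype '' Set.range ⇑c := by rw [← Set.range_comp]; rfl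
    rw [h1, ← MonoidHom.map_closure, c.closure_range_eq_top, ← MonoidHom.range_eq_map,
      Subgroup.range_subtype]
  · let q : ↥(Set.range v) ≃ ι := (Equiv.ofInjective v hvinj).symm
    have heq : FreeGroup.lift (fun s : ↥(Set.range v) => (s : G)) =
        (B.subtype.comp c.repr.symm.toMonoidHom).comp
          (FreeGroup.freeGroupCongr q).toMonoidHom := by
      apply FreeGroup.ext_hom
      intro u
      simp only [FreeGroup.lift_apply_of, MonoidHom.coe_comp, MulEquiv.coe_toMonoidHom,
        Function.comp_apply, FreeGroup.freeGroupCongr_apply, FreeGroup.map.of]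
      show (u : G) = ((c (q u) : ↥B) : G)
      exact (Equiv.apply_ofInjective_symm hvinj u).symm
    rw [heq]
    simp only [MonoidHom.coe_comp, MulEquiv.coe_toMonoidHom]
    exact (B.subtype_injective.comp c.repr.symm.injective).comp
      (FreeGroup.freeGroupCongr q).injective


/-- For free groups `A ≤ B ≤ C`, if `A` and `B` are both free factors of `C`,
then `A` is a free factor of `B`. -/
theorem freeFactor_of_freeFactors {α : Type*} (A B : Subgroup (FreeGroup α))
    (hAB : A ≤ B) (hA : IsFreeFactorOf A ⊤) (hB : IsFreeFactorOf B ⊤) :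
    IsFreeFactorOf A B := by
  classical
  obtain ⟨S, T₀, hdisj, ⟨hclos, hinj⟩, hSA⟩ := hA
  -- `S ∪ T₀` is a free basis of `FreeGroup α`
  have hsurj : Function.Surjective (FreeGroup.lift (fun s : ↥(S ∪ T₀) => (s : FreeGroup α))) := by
    rw [← MonoidHom.range_eq_top, FreeGroup.range_lift_eq_closure, Subtype.range_coe]
    exact hclos
  let e₀ : FreeGroup ↥(S ∪ T₀) ≃* FreeGroup α := MulEquiv.ofBijective _ ⟨hinj, hsurj⟩
  let b : FreeGroupBasis ↥(S ∪ T₀) (FreeGroup α) := FreeGroupBasis.ofRepr e₀.symm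
  have hb : ∀ i : ↥(S ∪ T₀), b i = (i : FreeGroup α) := by
    intro i
    show e₀.symm.symm (FreeGroup.of i) = _
    rw [MulEquiv.symm_symm]
    exact FreeGroup.lift_apply_of
  -- the action groupoid on the coset space of `B`, free over the basis `b`
  letI : IsFreeGroupoid (ActionCategory (FreeGroup α) (FreeGroup α ⧸ B)) :=
    actionGroupoidIsFreeOfBasis b
  let r : ActionCategory (FreeGroup α) (FreeGroup α ⧸ B) :=
    objEquiv (FreeGroup α) (FreeGroup α ⧸ B) ↑(1 : FreeGroup α)
  let rr : Symmetrify (Generators (ActionCategory (FreeGroup α) (FreeGroup α ⧸ B))) := r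
  letI : RootedConnected rr :=
    @generators_connected _ _ ActionCategory.instIsConnectedOfIsPretransitiveOfNonempty _ r
  let T : WideSubquiver (Symmetrify (Generators (ActionCategory (FreeGroup α) (FreeGroup α ⧸ B)))) :=
    geodesicSubtree rr
  letI hT : Arborescence (WideSubquiver.toType _ T) := geodesicArborescence rr
  -- the Schreier basis of `B`
  let c := (endBasisOfTree T).map (endMulEquivSubgroup B)
  let v := fun i => ((c i : ↥B) : FreeGroup α)
  have hfg := freelyGenerates_of_basis c
  -- each element of `S` is a Schreier basis element
  have hSB : S ⊆ (B : Set (FreeGroup α)) := fun s hs => hAB (hSA ▸ Subgroup.subset_closure hs)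
  have hSU : S ⊆ Set.range v := by
    intro s hs
    let i : ↥(S ∪ T₀) := ⟨s, Or.inl hs⟩
    have hpf : b i • (ActionCategory.back r) = ActionCategory.back r := by
      show b i • ((1 : FreeGroup α) : FreeGroup α ⧸ B) = ((1 : FreeGroup α) : FreeGroup α ⧸ B)
      rw [hb, MulAction.Quotient.smul_mk]
      exact QuotientGroup.eq.mpr (by rw [smul_eq_mul, mul_one, mul_one]; exact B.inv_mem (hSB hs))
    let ε : @Quiver.Hom (Generators (ActionCategory (FreeGroup α) (FreeGroup α ⧸ B))) _ r r :=
      ⟨i, hpf⟩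
    have hεT : ε ∉ wideSubquiverSymmetrify T r r := loop_not_mem_tree T ε
    let j : ↥((wideSubquiverEquivSetTotal (wideSubquiverSymmetrify T))ᶜ) := ⟨⟨r, r, ε⟩, hεT⟩
    refine ⟨j, ?_⟩
    show ((c j : ↥B) : FreeGroup α) = s
    have h5 : (c j : ↥B) = endMulEquivSubgroup B (endBasisOfTree T j) :=
      FreeGroupBasis.map_apply _ _ _
    have h6 : endBasisOfTree T j = loopOfHom T (IsFreeGroupoid.of j.val.hom) :=
      endBasisOfTree_apply T j
    have h7 : loopOfHom T (IsFreeGroupoid.of j.val.hom) = IsFreeGroupoid.of j.val.hom :=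
      loopOfHom_root T _
    rw [h5, h6, h7]
    exact hb i
  obtain ⟨hU1, hU2⟩ := hfg
  refine ⟨S, Set.range v \ S, disjoint_sdiff_self_right, ?_, hSA⟩
  rw [Set.union_diff_cancel hSU]
  exact ⟨hU1, hU2⟩

end
end

section
/- Let B be the free R-module on {b_i : i<ω} over a ring R, let a_i = b_i − r_i b_{i+1}, and suppose each partial product r_0⋯r_m is not a left zero-divisor. Then for each i, b_{i+1} is the unique element y of B satisfying r_i·y = b_i − a_i; consequently every b_j (j ≥ 1) lies in the quantifier-free definable closure of {a_i : i<ω} ∪ {b_0} in B. -/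
lemma partialProd_succ' {R : Type*} [Ring R] (r : ℕ → R) (m : ℕ) :
    partialProd r (m + 1) = partialProd r m * r (m + 1) := by
  unfold partialProd
  rw [List.ofFn_succ' (fun i : Fin (m + 2) => r i)]
  simp [List.concat_eq_append, Fin.last, mul_assoc]

lemma r_regular {R : Type*} [Ring R] (r : ℕ → R)
    (h : ∀ m, ∀ s : R, partialProd r m * s = 0 → s = 0) (i : ℕ) :
    ∀ s : R, r i * s = 0 → s = 0 := by
  intro s hs
  cases i with
  | zero => exact h 0 s (by simpa [partialProd] using hs)
  | succ n =>
      apply h (n + 1) s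
      rw [partialProd_succ', mul_assoc, hs, mul_zero]

/-- If no partial product `r 0 ⋯ r m` is a left zero-divisor, then in the free
module on `{b i}` with `a i = b i - r i • b (i+1)`, the element `b (i+1)` is the
unique solution `y` of `r i • y = b i - a i`; hence each `b (i+1)` is
quantifier-free definable from `a i` and `b i`. -/
theorem b_succ_unique_solution {R : Type*} [Ring R] (r : ℕ → R)
    (h : ∀ m, ∀ s : R, partialProd r m * s = 0 → s = 0) :
    ∀ i : ℕ,
      (∃! y : ℕ →₀ R, r i • y =
        Finsupp.single i (1 : R) -
          ((Finsupp.single i (1 : R) : ℕ →₀ R) - r i • Finsupp.single (i + 1) 1)) ∧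
      ∀ y : ℕ →₀ R, r i • y =
          Finsupp.single i (1 : R) -
            ((Finsupp.single i (1 : R) : ℕ →₀ R) - r i • Finsupp.single (i + 1) 1) →
        y = Finsupp.single (i + 1) 1 := by
  intro i
  have key : ∀ y : ℕ →₀ R, r i • y =
      Finsupp.single i (1 : R) -
        ((Finsupp.single i (1 : R) : ℕ →₀ R) - r i • Finsupp.single (i + 1) 1) →
      y = Finsupp.single (i + 1) 1 := by
    intro y hy
    rw [sub_sub_cancel] at hy
    ext n
    have := congrArg (fun f : ℕ →₀ R => f n) hy
    simp only [Finsupp.smul_apply, smul_eq_mul] at this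
    have h0 : r i * (y n - (Finsupp.single (i+1) (1:R)) n) = 0 := by
      rw [mul_sub, this, sub_self]
    have := r_regular r h i _ h0
    exact sub_eq_zero.mp this
  refine ⟨⟨Finsupp.single (i + 1) 1, by rw [sub_sub_cancel], fun y hy => key y hy⟩, key⟩
end
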